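/- arXiv:1601.06103 — 4 statements merged into one kernel-verified Lean document; each statement's English description precedes it below -/
import Mathlib

section
/- Let S be a finite set, let ℓ₁, ℓ₂ : S → (0,∞) be two probability mass functions on S, and let ν₁, ν₂ > 0 with ν₁ + ν₂ = 1. Define S¹ = {s ∈ S : ℓ₁(s)·ν₁ ≥ ℓ₂(s)·ν₂} and S⁻¹ = S \ S¹. If both S¹ and S⁻¹ are nonempty, then (∑_{s∈S¹} ℓ₁(s) / ∑_{s∈S¹} ℓ₂(s)) · (∑_{s∈S⁻¹} ℓ₂(s) / ∑_{s∈S⁻¹} ℓ₁(s)) ≥ 1; equivalently, the 'weight' w := log of this product is nonnegative. -/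
/-!
On `S1` every ratio `ℓ₁ s / ℓ₂ s` is at least `ν₂ / ν₁`, and on `Sm1` every ratio `ℓ₂ s / ℓ₁ s`
exceeds `ν₁ / ν₂`. By the mediant inequality the same bounds hold for the ratios of the sums,
so their product is at least `(ν₂ / ν₁) * (ν₁ / ν₂) = 1`.
-/

open Finset

theorem Finset.le_sum_div_sum_of_mul_le {ι K : Type*} [Field K] [LinearOrder K]
    [IsStrictOrderedRing K] {T : Finset ι} {f g : ι → K} {c : K}
    (hT : T.Nonempty) (hg : ∀ s ∈ T, 0 < g s) (h : ∀ s ∈ T, c * g s ≤ f s) :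
    c ≤ (∑ s ∈ T, f s) / ∑ s ∈ T, g s := by
  rw [le_div_iff₀ (sum_pos hg hT), mul_sum]
  exact sum_le_sum h

theorem weight_nonneg_general
    {S : Type*} [Fintype S] [DecidableEq S]
    (ℓ₁ ℓ₂ : S → ℝ)
    (hℓ₁pos : ∀ s, 0 < ℓ₁ s) (hℓ₂pos : ∀ s, 0 < ℓ₂ s)
    (ν₁ ν₂ : ℝ) (hν₁ : 0 < ν₁) (hν₂ : 0 < ν₂)
    (S1 Sm1 : Finset S)
    (hS1 : ∀ s, s ∈ S1 ↔ ℓ₂ s * ν₂ ≤ ℓ₁ s * ν₁)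
    (hSm1 : Sm1 = Finset.univ \ S1)
    (hS1ne : S1.Nonempty) (hSm1ne : Sm1.Nonempty) :
    1 ≤ ((∑ s ∈ S1, ℓ₁ s) / (∑ s ∈ S1, ℓ₂ s)) *
        ((∑ s ∈ Sm1, ℓ₂ s) / (∑ s ∈ Sm1, ℓ₁ s)) ∧
    0 ≤ Real.log (((∑ s ∈ S1, ℓ₁ s) / (∑ s ∈ S1, ℓ₂ s)) *
        ((∑ s ∈ Sm1, ℓ₂ s) / (∑ s ∈ Sm1, ℓ₁ s))) := by
  have hS1ratio : ν₂ / ν₁ ≤ (∑ s ∈ S1, ℓ₁ s) / ∑ s ∈ S1, ℓ₂ s :=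
    le_sum_div_sum_of_mul_le hS1ne (fun s _ ↦ hℓ₂pos s) fun s hs ↦ by
      rw [div_mul_eq_mul_div, div_le_iff₀ hν₁]
      linarith [(hS1 s).1 hs]
  have hSm1ratio : ν₁ / ν₂ ≤ (∑ s ∈ Sm1, ℓ₂ s) / ∑ s ∈ Sm1, ℓ₁ s :=
    le_sum_div_sum_of_mul_le hSm1ne (fun s _ ↦ hℓ₁pos s) fun s hs ↦ by
      have hlt : ℓ₁ s * ν₁ < ℓ₂ s * ν₂ := by
        rw [hSm1, mem_sdiff, hS1] at hs
        exact not_le.1 hs.2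
      rw [div_mul_eq_mul_div, div_le_iff₀ hν₂]
      linarith
  have hone :=
    calc (1 : ℝ) = ν₂ / ν₁ * (ν₁ / ν₂) := by field_simp
      _ ≤ _ := mul_le_mul hS1ratio hSm1ratio (by positivity) ((div_pos hν₂ hν₁).le.trans hS1ratio)
  exact ⟨hone, Real.log_nonneg hone⟩

theorem weight_nonneg
    {S : Type*} [Fintype S] [DecidableEq S]
    (ℓ₁ ℓ₂ : S → ℝ)
    (hℓ₁pos : ∀ s, 0 < ℓ₁ s) (hℓ₂pos : ∀ s, 0 < ℓ₂ s)
    (hℓ₁sum : ∑ s, ℓ₁ s = 1) (hℓ₂sum : ∑ s, ℓ₂ s = 1)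
    (ν₁ ν₂ : ℝ) (hν₁ : 0 < ν₁) (hν₂ : 0 < ν₂) (hν : ν₁ + ν₂ = 1)
    (S1 Sm1 : Finset S)
    (hS1 : ∀ s, s ∈ S1 ↔ ℓ₂ s * ν₂ ≤ ℓ₁ s * ν₁)
    (hSm1 : Sm1 = Finset.univ \ S1)
    (hS1ne : S1.Nonempty) (hSm1ne : Sm1.Nonempty) :
    1 ≤ ((∑ s ∈ S1, ℓ₁ s) / (∑ s ∈ S1, ℓ₂ s)) *
        ((∑ s ∈ Sm1, ℓ₂ s) / (∑ s ∈ Sm1, ℓ₁ s)) ∧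
    0 ≤ Real.log (((∑ s ∈ S1, ℓ₁ s) / (∑ s ∈ S1, ℓ₂ s)) *
        ((∑ s ∈ Sm1, ℓ₂ s) / (∑ s ∈ Sm1, ℓ₁ s))) :=
  weight_nonneg_general ℓ₁ ℓ₂ hℓ₁pos hℓ₂pos ν₁ ν₂ hν₁ hν₂ S1 Sm1 hS1 hSm1 hS1ne hSm1ne
end

section
/- Let Θ be a finite set, θ ∈ Θ, S a finite signal set, ℓ(·|θ̂) strictly positive likelihoods, ν a full-support prior, and let (s_t)_{t≥0} be i.i.d. with law ℓ(·|θ). If D_KL(ℓ(·|θ) ‖ ℓ(·|θ̌)) > 0 for every θ̌ ≠ θ, then the Bayesian posterior μ_t formed from ν and the signals s_0,…,s_t satisfies μ_t(θ) → 1 almost surely as t → ∞. -/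
/-! Unrolling Bayes' rule, the posterior odds of a false state `θ̌` against the truth `θ` are the
prior odds times `exp (∑_{k ≤ t} λ_θ̌(s_k))`. The increments `λ_θ̌(s_k)` are i.i.d. with mean
`-D_KL(ℓ(·|θ) ‖ ℓ(·|θ̌)) < 0`, so by the strong law of large numbers the sum tends to `-∞` almost
surely. Hence all odds against `θ` vanish and `μ_t(θ) = 1 / ∑_θ' (odds of θ' against θ) → 1`.
-/

open Finset Filter MeasureTheory ProbabilityTheory Topology

section Posterior

variable {Θ : Type*} [Fintype Θ]

theorem bayes_recursion_eq_div_sum (ν : Θ → ℝ) (L : ℕ → Θ → ℝ) (μ : ℕ → Θ → ℝ)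
    (hZ : ∀ t, ∑ θ, ν θ * ∏ k ∈ range (t + 1), L k θ ≠ 0)
    (h0 : ∀ θ, μ 0 θ = ν θ * L 0 θ / ∑ θ', ν θ' * L 0 θ')
    (hstep : ∀ t θ, μ (t + 1) θ = μ t θ * L (t + 1) θ / ∑ θ', μ t θ' * L (t + 1) θ') :
    ∀ t θ, μ t θ =
      (ν θ * ∏ k ∈ range (t + 1), L k θ) / ∑ θ', ν θ' * ∏ k ∈ range (t + 1), L k θ' := by
  intro t
  induction t with
  | zero => simpa only [zero_add, range_one, prod_singleton] using h0
  | succ t ih =>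
    intro θ
    have hprod : ∀ θ', (ν θ' * ∏ k ∈ range (t + 1), L k θ') * L (t + 1) θ' =
        ν θ' * ∏ k ∈ range (t + 1 + 1), L k θ' := fun θ' => by
      rw [prod_range_succ _ (t + 1), mul_assoc]
    simp only [hstep, ih, div_mul_eq_mul_div, ← sum_div, hprod]
    exact div_div_div_cancel_right₀ (hZ t) _ _

theorem tendsto_div_sum_of_tendsto_div {ι : Type*} {l : Filter ι} (W : ι → Θ → ℝ) (θ : Θ)
    (hW : ∀ i, W i θ ≠ 0) (h : ∀ θ' ≠ θ, Tendsto (fun i => W i θ' / W i θ) l (𝓝 0)) :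
    Tendsto (fun i => W i θ / ∑ θ', W i θ') l (𝓝 1) := by
  classical
  have hodds : Tendsto (fun i => ∑ θ', W i θ' / W i θ) l (𝓝 1) := by
    have hterm : ∀ θ', Tendsto (fun i => W i θ' / W i θ) l (𝓝 (if θ' = θ then 1 else 0)) := by
      intro θ'
      split_ifs with hθ'
      · subst hθ'
        simp only [div_self (hW _), tendsto_const_nhds]
      · exact h θ' hθ'
    simpa using tendsto_finsetSum univ fun θ' _ => hterm θ'
  simpa [← sum_div] using hodds.inv₀ one_ne_zero
end Posterior

theorem tendsto_atBot_of_tendsto_div_natCast {u : ℕ → ℝ} {c : ℝ} (hc : c < 0)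
    (h : Tendsto (fun n => u n / n) atTop (𝓝 c)) : Tendsto u atTop atBot := by
  refine (h.neg_mul_atTop hc tendsto_natCast_atTop_atTop).congr' ?_
  filter_upwards [eventually_ne_atTop 0] with n hn
  exact div_mul_cancel₀ _ (Nat.cast_ne_zero.mpr hn)

theorem ae_tendsto_sum_atBot_of_integral_neg {Ω : Type*} [MeasurableSpace Ω] {P : Measure Ω}
    (X : ℕ → Ω → ℝ) (hint : Integrable (X 0) P)
    (hindep : Pairwise (Function.onFun (IndepFun · · P) X))
    (hident : ∀ i, IdentDistrib (X i) (X 0) P P) (hneg : P[X 0] < 0) :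
    ∀ᵐ ω ∂P, Tendsto (fun n => ∑ i ∈ range n, X i ω) atTop atBot := by
  filter_upwards [strong_law_ae_real X hint hindep hident] with ω hω
  exact tendsto_atBot_of_tendsto_div_natCast hneg hω

section Signals

variable {S : Type*} [Fintype S] [MeasurableSpace S] [MeasurableSingletonClass S]
  {Ω : Type*} [MeasurableSpace Ω] {P : Measure Ω} {p : S → ℝ}

theorem identDistrib_of_measure_preimage_singleton {X Y : Ω → S} (hX : Measurable X)
    (hY : Measurable Y) (h : ∀ x, P (X ⁻¹' {x}) = P (Y ⁻¹' {x})) : IdentDistrib X Y P P where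
  aemeasurable_fst := hX.aemeasurable
  aemeasurable_snd := hY.aemeasurable
  map_eq := Measure.ext_of_singleton fun x => by
    rw [Measure.map_apply hX (measurableSet_singleton x),
      Measure.map_apply hY (measurableSet_singleton x), h]

theorem integral_comp_eq_sum [IsFiniteMeasure P] {X : Ω → S} (hX : Measurable X)
    (hp : ∀ x, 0 ≤ p x) (hlaw : ∀ x, P (X ⁻¹' {x}) = ENNReal.ofReal (p x)) (f : S → ℝ) :
    ∫ ω, f (X ω) ∂P = ∑ x, p x * f x := by
  have hf : Measurable f := measurable_of_countable f
  rw [← integral_map hX.aemeasurable hf.aestronglyMeasurable, integral_fintype .of_finite]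
  refine sum_congr rfl fun x _ => ?_
  rw [measureReal_def, Measure.map_apply hX (measurableSet_singleton x), hlaw,
    ENNReal.toReal_ofReal (hp x), smul_eq_mul]

theorem ae_tendsto_sum_comp_atBot [IsProbabilityMeasure P] {X : ℕ → Ω → S}
    (hX : ∀ t, Measurable (X t)) (hindep : iIndepFun X P) (hp : ∀ x, 0 ≤ p x)
    (hlaw : ∀ t x, P (X t ⁻¹' {x}) = ENNReal.ofReal (p x)) (f : S → ℝ)
    (hneg : ∑ x, p x * f x < 0) :
    ∀ᵐ ω ∂P, Tendsto (fun n => ∑ i ∈ range n, f (X i ω)) atTop atBot := by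
  have hf : Measurable f := measurable_of_countable f
  refine ae_tendsto_sum_atBot_of_integral_neg (fun i ω => f (X i ω)) ?_
    (fun i j hij => (hindep.indepFun hij).comp hf hf)
    (fun i => (identDistrib_of_measure_preimage_singleton (hX i) (hX 0)
      fun x => by rw [hlaw, hlaw]).comp hf) ?_
  · exact (integrable_map_measure hf.aestronglyMeasurable (hX 0).aemeasurable).mp .of_finite
  · rwa [integral_comp_eq_sum (hX 0) hp (hlaw 0)]

end Signals

/-- The paper's `λ_{θ̌}(s) = log (ℓ(s|θ̌) / ℓ(s|θ))`. -/
noncomputable def logLikelihoodRatio {S Θ : Type*} (ℓ : S → Θ → ℝ) (θ θc : Θ) (x : S) : ℝ :=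
  Real.log (ℓ x θc / ℓ x θ)

theorem sum_mul_logLikelihoodRatio {S Θ : Type*} [Fintype S] (ℓ : S → Θ → ℝ) (θ θc : Θ) :
    ∑ x, ℓ x θ * logLikelihoodRatio ℓ θ θc x = -∑ x, ℓ x θ * Real.log (ℓ x θ / ℓ x θc) := by
  simp only [logLikelihoodRatio, ← inv_div (ℓ _ θ), Real.log_inv, mul_neg, sum_neg_distrib]

theorem prod_div_prod_eq_exp_sum_logLikelihoodRatio {S Θ : Type*} {ℓ : S → Θ → ℝ}
    (hℓ : ∀ x θh, 0 < ℓ x θh) (θ θc : Θ) (xs : ℕ → S) (n : ℕ) :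
    (∏ k ∈ range n, ℓ (xs k) θc) / ∏ k ∈ range n, ℓ (xs k) θ =
      Real.exp (∑ k ∈ range n, logLikelihoodRatio ℓ θ θc (xs k)) := by
  rw [← prod_div_distrib, Real.exp_sum]
  exact prod_congr rfl fun k _ => (Real.exp_log (div_pos (hℓ _ _) (hℓ _ _))).symm

theorem single_agent_bayesian_learning_general
    {Θ : Type*} [Fintype Θ] {S : Type*} [Fintype S] [MeasurableSpace S]
    [MeasurableSingletonClass S]
    (θ : Θ) (ℓ : S → Θ → ℝ) (hℓ : ∀ s θh, 0 < ℓ s θh)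
    (ν : Θ → ℝ) (hν : ∀ θh, 0 < ν θh)
    {Ω : Type*} [MeasurableSpace Ω] (P : Measure Ω) [IsProbabilityMeasure P]
    (s : ℕ → Ω → S) (hmeas : ∀ t, Measurable (s t))
    (hindep : iIndepFun s P)
    (hlaw : ∀ (t : ℕ) (x : S), P (s t ⁻¹' {x}) = ENNReal.ofReal (ℓ x θ))
    (μ : ℕ → Ω → Θ → ℝ)
    (h0 : ∀ ω θh, μ 0 ω θh = ν θh * ℓ (s 0 ω) θh / ∑ θt, ν θt * ℓ (s 0 ω) θt)
    (hstep : ∀ t ω θh, μ (t + 1) ω θh =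
      μ t ω θh * ℓ (s (t + 1) ω) θh / ∑ θt, μ t ω θt * ℓ (s (t + 1) ω) θt)
    (hKL : ∀ θc, θc ≠ θ → 0 < ∑ x, ℓ x θ * Real.log (ℓ x θ / ℓ x θc)) :
    ∀ᵐ ω ∂P, Tendsto (fun t => μ t ω θ) atTop (nhds 1) := by
  set W : Ω → ℕ → Θ → ℝ := fun ω t θh => ν θh * ∏ k ∈ range (t + 1), ℓ (s k ω) θh
  have hW : ∀ ω t θh, 0 < W ω t θh := fun _ _ θh => mul_pos (hν θh) (prod_pos fun _ _ => hℓ _ _)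
  have hposterior : ∀ ω t, μ t ω θ = W ω t θ / ∑ θh, W ω t θh := fun ω t =>
    bayes_recursion_eq_div_sum ν (fun k => ℓ (s k ω)) (μ · ω)
      (fun t => (sum_pos (fun θh _ => hW ω t θh) ⟨θ, mem_univ θ⟩).ne') (h0 ω) (hstep · ω) t θ
  have hdrift : ∀ᵐ ω ∂P, ∀ θc, θc ≠ θ →
      Tendsto (fun n => ∑ k ∈ range n, logLikelihoodRatio ℓ θ θc (s k ω)) atTop atBot := by
    refine ae_all_iff.2 fun θc => ?_
    by_cases hc : θc = θ
    · exact .of_forall fun _ hne => absurd hc hne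
    filter_upwards [ae_tendsto_sum_comp_atBot hmeas hindep (fun x => (hℓ x θ).le) hlaw
      (logLikelihoodRatio ℓ θ θc) (by linarith [sum_mul_logLikelihoodRatio ℓ θ θc, hKL θc hc])]
      with ω hω _ using hω
  filter_upwards [hdrift] with ω hω
  simp only [hposterior]
  refine tendsto_div_sum_of_tendsto_div (W ω) θ (fun t => (hW ω t θ).ne') fun θc hc => ?_
  have hlim := ((Real.tendsto_exp_atBot.comp ((hω θc hc).comp (tendsto_add_atTop_nat 1))).const_mul
      (ν θc / ν θ))
  rw [mul_zero] at hlim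
  refine hlim.congr fun t => ?_
  simp only [W, Function.comp_apply, ← prod_div_prod_eq_exp_sum_logLikelihoodRatio hℓ,
    mul_div_mul_comm]

/-- Consistency of single-agent Bayesian learning with i.i.d. signals: if
every false state is distinguishable from the truth (positive KL divergence),
then the Bayesian posterior concentrates on the truth almost surely. -/
theorem single_agent_bayesian_learning
    {Θ : Type*} [Fintype Θ] {S : Type*} [Fintype S] [MeasurableSpace S]
    [MeasurableSingletonClass S]
    (θ : Θ) (ℓ : S → Θ → ℝ) (hℓ : ∀ s θh, 0 < ℓ s θh)
    (hℓsum : ∀ θh, ∑ s, ℓ s θh = 1)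
    (ν : Θ → ℝ) (hν : ∀ θh, 0 < ν θh) (hνsum : ∑ θh, ν θh = 1)
    {Ω : Type*} [MeasurableSpace Ω] (P : Measure Ω) [IsProbabilityMeasure P]
    (s : ℕ → Ω → S) (hmeas : ∀ t, Measurable (s t))
    (hindep : iIndepFun s P)
    (hlaw : ∀ (t : ℕ) (x : S), P (s t ⁻¹' {x}) = ENNReal.ofReal (ℓ x θ))
    (μ : ℕ → Ω → Θ → ℝ)
    (h0 : ∀ ω θh, μ 0 ω θh = ν θh * ℓ (s 0 ω) θh / ∑ θt, ν θt * ℓ (s 0 ω) θt)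
    (hstep : ∀ t ω θh, μ (t + 1) ω θh =
      μ t ω θh * ℓ (s (t + 1) ω) θh / ∑ θt, μ t ω θt * ℓ (s (t + 1) ω) θt)
    (hKL : ∀ θc, θc ≠ θ → 0 < ∑ x, ℓ x θ * Real.log (ℓ x θ / ℓ x θc)) :
    ∀ᵐ ω ∂P, Tendsto (fun t => μ t ω θ) atTop (nhds 1) :=
  single_agent_bayesian_learning_general θ ℓ hℓ ν hν P s hmeas hindep hlaw μ h0 hstep hKL
end

section
/- In the directed-cycle setting above, if the truth is globally identifiable, i.e., ∑_{j=1}^n D_KL(ℓ_j(·|θ)‖ℓ_j(·|θ̌)) > 0 for every θ̌ ≠ θ, then every agent learns the truth: μ_{i,t}(θ) → 1 almost surely as t → ∞ for all i, even if no single agent can identify θ from her own signals (i.e., even if D_KL(ℓ_i(·|θ)‖ℓ_i(·|θ̌)) = 0 for some i, θ̌). -/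
/-!
Only the ratios of beliefs matter. Unwinding the circular update, the log of
`μ_{i,t}(θ) / μ_{i,t}(θc)` equals the log prior ratio plus the log-likelihood ratios of the signals
met along the path reaching agent `i` at time `t`, which visits agents `i - t, i - t + 1, …, i`.
Grouping the terms of this path by residue mod `n`, each group is an i.i.d. sequence, so by the
strong law the path sum grows like `m ∑_j D_KL(ℓ_j(·|θ)‖ℓ_j(·|θc))` after `m` laps. Global
identifiability makes this drift positive, so every false state's belief ratio vanishes.
-/

open Finset Filter MeasureTheory ProbabilityTheory

theorem sum_range_mul_eq_sum_sum (g : ℕ → ℝ) (m n : ℕ) :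
    ∑ k ∈ range (m * n), g k = ∑ d ∈ range n, ∑ b ∈ range m, g (b * n + d) := by
  rw [sum_comm]
  induction m with
  | zero => simp
  | succ m ih => rw [sum_range_succ, ← ih, Nat.succ_mul, sum_range_add]

theorem tendsto_atTop_of_div_natCast_tendsto {v : ℕ → ℝ} {L : ℝ} (hL : 0 < L)
    (hv : Tendsto (fun m => v m / m) atTop (nhds L)) : Tendsto v atTop atTop := by
  refine (hv.pos_mul_atTop hL tendsto_natCast_atTop_atTop).congr' ?_
  filter_upwards [eventually_ne_atTop 0] with m hm
  field_simp

theorem tendsto_sum_range_atTop_of_tendsto_mul {g : ℕ → ℝ} {n : ℕ} (hn : n ≠ 0) {C : ℝ}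
    (hg : ∀ k, C ≤ g k) (h : Tendsto (fun m => ∑ k ∈ range (m * n), g k) atTop atTop) :
    Tendsto (fun N => ∑ k ∈ range N, g k) atTop atTop := by
  have hrem : ∀ N, ∑ k ∈ range (N / n * n), g k - n * |C| ≤ ∑ k ∈ range N, g k := by
    intro N
    have hr : N % n < n := Nat.mod_lt _ (Nat.pos_of_ne_zero hn)
    calc ∑ k ∈ range (N / n * n), g k - n * |C|
        ≤ ∑ k ∈ range (N / n * n), g k + ∑ _k ∈ range (N % n), C := by
          rw [sum_const, card_range, nsmul_eq_mul]
          nlinarith [neg_abs_le C, abs_nonneg C, (Nat.cast_le (α := ℝ)).2 hr.le]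
      _ ≤ ∑ k ∈ range (N / n * n), g k + ∑ k ∈ range (N % n), g (N / n * n + k) := by
          gcongr with k; exact hg _
      _ = ∑ k ∈ range N, g k := by rw [← sum_range_add, Nat.div_add_mod']
  exact tendsto_atTop_mono hrem
    (tendsto_atTop_add_const_right _ _ (h.comp (Nat.tendsto_div_const_atTop hn)))

theorem tendsto_atTop_apply_of_forall_tendsto {ι : Type*} [Finite ι] {f : ι → ℕ → ℝ}
    (hf : ∀ c, Tendsto (f c) atTop atTop) (c : ℕ → ι) {φ : ℕ → ℕ}
    (hφ : Tendsto φ atTop atTop) : Tendsto (fun t => f (c t) (φ t)) atTop atTop :=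
  tendsto_atTop.2 fun M =>
    (hφ.eventually (eventually_all.2 fun c => tendsto_atTop.1 (hf c) M)).mono fun t h => h (c t)

theorem strong_law_ae_of_fintype {Ω : Type*} [MeasurableSpace Ω] {P : Measure Ω}
    [IsFiniteMeasure P] {α : Type*} [Fintype α] [MeasurableSpace α] [MeasurableSingletonClass α]
    {Y : ℕ → Ω → α} (hY : ∀ k, Measurable (Y k))
    (hindep : Pairwise fun a b => IndepFun (Y a) (Y b) P)
    {p : α → ℝ} (hp : ∀ x, 0 ≤ p x) (hlaw : ∀ k x, P (Y k ⁻¹' {x}) = ENNReal.ofReal (p x))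
    (f : α → ℝ) :
    ∀ᵐ ω ∂P, Tendsto (fun m => (∑ b ∈ range m, f (Y b ω)) / m) atTop
      (nhds (∑ x, p x * f x)) := by
  have hf : Measurable f := measurable_of_finite f
  have hmap : ∀ k, P.map (Y k) = P.map (Y 0) := fun k =>
    Measure.ext_of_singleton fun x => by
      rw [Measure.map_apply (hY k) (measurableSet_singleton x),
        Measure.map_apply (hY 0) (measurableSet_singleton x), hlaw, hlaw]
  have hident : ∀ k, IdentDistrib (f ∘ Y k) (f ∘ Y 0) P P := fun k =>
    (IdentDistrib.mk (hY k).aemeasurable (hY 0).aemeasurable (hmap k)).comp hf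
  have hmean : P[f ∘ Y 0] = ∑ x, p x * f x := by
    rw [Function.comp_def, ← integral_map (hY 0).aemeasurable hf.aestronglyMeasurable,
      integral_fintype (f := f) Integrable.of_finite]
    refine sum_congr rfl fun x _ => ?_
    rw [measureReal_def, Measure.map_apply (hY 0) (measurableSet_singleton x), hlaw,
      ENNReal.toReal_ofReal (hp x), smul_eq_mul]
  have hint : Integrable (f ∘ Y 0) P :=
    (integrable_map_measure hf.aestronglyMeasurable (hY 0).aemeasurable).1 Integrable.of_finite
  rw [← hmean]
  exact strong_law_ae_real (fun k => f ∘ Y k) hint (fun a b hab => (hindep hab).comp hf hf) hident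

open Fin.NatCast Fin.CommRing

theorem sum_range_natCast_add {n : ℕ} [NeZero n] {M : Type*} [AddCommMonoid M] (F : Fin n → M)
    (c : Fin n) : ∑ d ∈ range n, F (c + d) = ∑ j, F j := by
  rw [← Fin.sum_univ_eq_sum_range (fun d => F (c + d))]
  simp only [Fin.cast_val_eq_self]
  exact Equiv.sum_comp (Equiv.addLeft c) F

theorem tendsto_atTop_sum_along_cycle {n : ℕ} [NeZero n] {S : Fin n → Type*}
    [∀ j, Fintype (S j)] [∀ j, MeasurableSpace (S j)] [∀ j, MeasurableSingletonClass (S j)]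
    {Ω : Type*} [MeasurableSpace Ω] {P : Measure Ω} [IsFiniteMeasure P]
    {s : ∀ p : ℕ × Fin n, Ω → S p.2} (hmeas : ∀ p, Measurable (s p)) (hindep : iIndepFun s P)
    {p : ∀ j, S j → ℝ} (hp : ∀ j x, 0 ≤ p j x)
    (hlaw : ∀ t j x, P (s (t, j) ⁻¹' {x}) = ENNReal.ofReal (p j x))
    (L : ∀ j, S j → ℝ) (hdrift : 0 < ∑ j, ∑ x, p j x * L j x) (c : Fin n) :
    ∀ᵐ ω ∂P, Tendsto (fun N => ∑ k ∈ range N, L (c + k) (s (k, c + k) ω)) atTop atTop := by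
  have hn : n ≠ 0 := NeZero.ne n
  obtain ⟨C, hC⟩ : ∃ C, ∀ j x, C ≤ L j x := by
    obtain ⟨C, hC⟩ := (Set.finite_range fun jx : Σ j, S j => L jx.1 jx.2).bddBelow
    exact ⟨C, fun j x => hC ⟨⟨j, x⟩, rfl⟩⟩
  have hblock : ∀ d : ℕ, ∀ᵐ ω ∂P, Tendsto
      (fun m => (∑ b ∈ range m, L (c + d) (s (b * n + d, c + d) ω)) / m) atTop
      (nhds (∑ x, p (c + d) x * L (c + d) x)) := fun d =>
    strong_law_ae_of_fintype (Y := fun b => s (b * n + d, c + d)) (fun b => hmeas _)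
      (fun a b hab => hindep.indepFun fun h => hab (by simpa [hn] using h))
      (hp _) (fun _ => hlaw _ _) (L (c + d))
  filter_upwards [ae_all_iff.2 hblock] with ω hω
  have hcycle : ∀ b d : ℕ, L (c + ↑(b * n + d)) (s (b * n + d, c + ↑(b * n + d)) ω)
      = L (c + d) (s (b * n + d, c + d) ω) := by
    intro b d
    rw [show ((b * n + d : ℕ) : Fin n) = d by simp]
  refine tendsto_sum_range_atTop_of_tendsto_mul hn (fun k => hC _ _)
    (tendsto_atTop_of_div_natCast_tendsto hdrift ?_)
  rw [← sum_range_natCast_add _ c]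
  refine (tendsto_finsetSum (range n) fun d _ => hω d).congr fun m => ?_
  simp only [sum_range_mul_eq_sum_sum, sum_div, hcycle]

section CircularUpdate

variable {n : ℕ} [NeZero n] {Θ : Type*} [Fintype Θ] {S : Fin n → Type*}
  {ℓ : ∀ i, S i → Θ → ℝ} {ν : Θ → ℝ} {Ω : Type*} {s : ∀ p : ℕ × Fin n, Ω → S p.2}
  {μ : ℕ → Fin n → Ω → Θ → ℝ}

theorem circular_belief_pos (hℓ : ∀ i x θh, 0 < ℓ i x θh) (hν : ∀ θh, 0 < ν θh)
    (h0 : ∀ i ω θh, μ 0 i ω θh =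
      ν θh * ℓ i (s (0, i) ω) θh / ∑ θt, ν θt * ℓ i (s (0, i) ω) θt)
    (hstep : ∀ t i ω θh, μ (t + 1) i ω θh =
      μ t (i - 1) ω θh * ℓ i (s (t + 1, i) ω) θh /
        ∑ θt, μ t (i - 1) ω θt * ℓ i (s (t + 1, i) ω) θt)
    (t : ℕ) (i : Fin n) (ω : Ω) (θh : Θ) : 0 < μ t i ω θh := by
  have hne : (univ : Finset Θ).Nonempty := ⟨θh, mem_univ _⟩
  induction t generalizing i θh with
  | zero =>
    rw [h0]
    exact div_pos (mul_pos (hν _) (hℓ _ _ _)) (sum_pos (fun _ _ => mul_pos (hν _) (hℓ _ _ _)) hne)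
  | succ t ih =>
    rw [hstep]
    exact div_pos (mul_pos (ih _ _) (hℓ _ _ _))
      (sum_pos (fun _ _ => mul_pos (ih _ _) (hℓ _ _ _)) hne)

theorem circular_belief_sum_eq_one [Nonempty Θ] (hℓ : ∀ i x θh, 0 < ℓ i x θh)
    (hν : ∀ θh, 0 < ν θh)
    (h0 : ∀ i ω θh, μ 0 i ω θh =
      ν θh * ℓ i (s (0, i) ω) θh / ∑ θt, ν θt * ℓ i (s (0, i) ω) θt)
    (hstep : ∀ t i ω θh, μ (t + 1) i ω θh =
      μ t (i - 1) ω θh * ℓ i (s (t + 1, i) ω) θh /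
        ∑ θt, μ t (i - 1) ω θt * ℓ i (s (t + 1, i) ω) θt)
    (t : ℕ) (i : Fin n) (ω : Ω) : ∑ θh, μ t i ω θh = 1 := by
  cases t with
  | zero =>
    simp only [h0, ← sum_div]
    exact div_self (sum_pos (fun _ _ => mul_pos (hν _) (hℓ _ _ _)) univ_nonempty).ne'
  | succ t =>
    simp only [hstep, ← sum_div]
    exact div_self (sum_pos (fun _ _ => mul_pos
      (circular_belief_pos hℓ hν h0 hstep _ _ _ _) (hℓ _ _ _)) univ_nonempty).ne'

/-- Agent `i - t + k` is the one whose signal at time `k` reaches agent `i` at time `t`. -/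
theorem circular_belief_ratio_eq (hℓ : ∀ i x θh, 0 < ℓ i x θh) (hν : ∀ θh, 0 < ν θh)
    (h0 : ∀ i ω θh, μ 0 i ω θh =
      ν θh * ℓ i (s (0, i) ω) θh / ∑ θt, ν θt * ℓ i (s (0, i) ω) θt)
    (hstep : ∀ t i ω θh, μ (t + 1) i ω θh =
      μ t (i - 1) ω θh * ℓ i (s (t + 1, i) ω) θh /
        ∑ θt, μ t (i - 1) ω θt * ℓ i (s (t + 1, i) ω) θt)
    (θ θc : Θ) (t : ℕ) (i : Fin n) (ω : Ω) :
    μ t i ω θ / μ t i ω θc = ν θ / ν θc * Real.exp (∑ k ∈ range (t + 1),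
      Real.log (ℓ (i - t + k) (s (k, i - t + k) ω) θ / ℓ (i - t + k) (s (k, i - t + k) ω) θc)) := by
  have hne : (univ : Finset Θ).Nonempty := ⟨θ, mem_univ _⟩
  induction t generalizing i with
  | zero =>
    rw [h0, h0, div_div_div_cancel_right₀
      (sum_pos (fun _ _ => mul_pos (hν _) (hℓ _ _ _)) hne).ne', mul_div_mul_comm,
      sum_range_one, Real.exp_log (div_pos (hℓ _ _ _) (hℓ _ _ _)),
      show i - ((0 : ℕ) : Fin n) + ((0 : ℕ) : Fin n) = i by simp]
  | succ t ih =>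
    have hpos := circular_belief_pos hℓ hν h0 hstep
    rw [hstep, hstep, div_div_div_cancel_right₀
      (sum_pos (fun _ _ => mul_pos (hpos _ _ _ _) (hℓ _ _ _)) hne).ne', mul_div_mul_comm, ih,
      show i - ((t + 1 : ℕ) : Fin n) = i - 1 - t by push_cast; ring, sum_range_succ _ (t + 1),
      show i - 1 - t + ((t + 1 : ℕ) : Fin n) = i by push_cast; ring, Real.exp_add,
      Real.exp_log (div_pos (hℓ _ _ _) (hℓ _ _ _)), mul_assoc]

end CircularUpdate

theorem tendsto_one_of_ratio_tendsto_zero {Θ : Type*} [Fintype Θ] {q : ℕ → Θ → ℝ} {θ : Θ}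
    (hq : ∀ t, q t θ ≠ 0) (hsum : ∀ t, ∑ θh, q t θh = 1)
    (hratio : ∀ θc, θc ≠ θ → Tendsto (fun t => q t θc / q t θ) atTop (nhds 0)) :
    Tendsto (fun t => q t θ) atTop (nhds 1) := by
  classical
  have hlim : ∀ θh, Tendsto (fun t => q t θh / q t θ) atTop (nhds (if θh = θ then 1 else 0)) := by
    intro θh
    split_ifs with h
    · subst h
      exact tendsto_const_nhds.congr fun t => (div_self (hq t)).symm
    · exact hratio θh h
  have hinv := (tendsto_finsetSum univ fun θh _ => hlim θh).inv₀ (by simp)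
  simpa only [sum_ite_eq', mem_univ, if_true, inv_one, ← sum_div, hsum, one_div, inv_inv]
    using hinv

theorem directed_cycle_learning_general
    {n : ℕ} [NeZero n]
    {Θ : Type*} [Fintype Θ]
    (S : Fin n → Type*) [∀ i, Fintype (S i)] [∀ i, MeasurableSpace (S i)]
    [∀ i, MeasurableSingletonClass (S i)]
    (θ : Θ) (ℓ : ∀ i, S i → Θ → ℝ) (hℓ : ∀ i s θh, 0 < ℓ i s θh)
    (ν : Θ → ℝ) (hν : ∀ θh, 0 < ν θh)
    {Ω : Type*} [MeasurableSpace Ω] (P : Measure Ω) [IsProbabilityMeasure P]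
    (s : ∀ p : ℕ × Fin n, Ω → S p.2) (hmeas : ∀ p, Measurable (s p))
    (hindep : iIndepFun s P)
    (hlaw : ∀ (t : ℕ) (i : Fin n) (x : S i),
      P (s (t, i) ⁻¹' {x}) = ENNReal.ofReal (ℓ i x θ))
    (μ : ℕ → Fin n → Ω → Θ → ℝ)
    (h0 : ∀ i ω θh, μ 0 i ω θh =
      ν θh * ℓ i (s (0, i) ω) θh / ∑ θt, ν θt * ℓ i (s (0, i) ω) θt)
    (hstep : ∀ t i ω θh, μ (t + 1) i ω θh =
      μ t (i - 1) ω θh * ℓ i (s (t + 1, i) ω) θh /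
        ∑ θt, μ t (i - 1) ω θt * ℓ i (s (t + 1, i) ω) θt)
    (hglobal : ∀ θc : Θ, θc ≠ θ →
      0 < ∑ j, ∑ x, ℓ j x θ * Real.log (ℓ j x θ / ℓ j x θc)) :
    ∀ i : Fin n,
      ∀ᵐ ω ∂P, Tendsto (fun t => μ t i ω θ) atTop (nhds 1) := by
  intro i
  have : Nonempty Θ := ⟨θ⟩
  have hdrift : ∀ θc, θc ≠ θ → ∀ c : Fin n, ∀ᵐ ω ∂P, Tendsto (fun N => ∑ k ∈ range N,
      Real.log (ℓ (c + k) (s (k, c + k) ω) θ / ℓ (c + k) (s (k, c + k) ω) θc)) atTop atTop :=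
    fun θc hθc => tendsto_atTop_sum_along_cycle hmeas hindep (fun j x => (hℓ j x θ).le) hlaw
      (fun j x => Real.log (ℓ j x θ / ℓ j x θc)) (hglobal θc hθc)
  filter_upwards [ae_all_iff.2 fun θc => eventually_imp_distrib_left.2 fun h =>
    ae_all_iff.2 (hdrift θc h)] with ω hω
  refine tendsto_one_of_ratio_tendsto_zero
    (fun t => (circular_belief_pos hℓ hν h0 hstep t i ω θ).ne')
    (fun t => circular_belief_sum_eq_one hℓ hν h0 hstep t i ω) fun θc hθc => ?_
  have hΛ := tendsto_atTop_apply_of_forall_tendsto (hω θc hθc) (fun t => i - t)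
    (tendsto_add_atTop_nat 1)
  refine ((Real.tendsto_exp_atTop.comp hΛ).const_mul_atTop
    (div_pos (hν θ) (hν θc))).inv_tendsto_atTop.congr fun t => ?_
  rw [Pi.inv_apply, Function.comp_apply,
    ← circular_belief_ratio_eq hℓ hν h0 hstep θ θc t i ω, inv_div]

/-- Learning rate in the directed circle: under the circular BWR update the
log belief ratio of any false state decays at the asymptotic rate
`(1/n) ∑_j D_KL(ℓ_j(·|θ)‖ℓ_j(·|θc))`, almost surely. -/
theorem directed_cycle_learning
    {n : ℕ} [NeZero n]
    {Θ : Type*} [Fintype Θ]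
    (S : Fin n → Type*) [∀ i, Fintype (S i)] [∀ i, MeasurableSpace (S i)]
    [∀ i, MeasurableSingletonClass (S i)]
    (θ : Θ) (ℓ : ∀ i, S i → Θ → ℝ) (hℓ : ∀ i s θh, 0 < ℓ i s θh)
    (hℓsum : ∀ i θh, ∑ s, ℓ i s θh = 1)
    (ν : Θ → ℝ) (hν : ∀ θh, 0 < ν θh) (hνsum : ∑ θh, ν θh = 1)
    {Ω : Type*} [MeasurableSpace Ω] (P : Measure Ω) [IsProbabilityMeasure P]
    (s : ∀ p : ℕ × Fin n, Ω → S p.2) (hmeas : ∀ p, Measurable (s p))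
    (hindep : iIndepFun s P)
    (hlaw : ∀ (t : ℕ) (i : Fin n) (x : S i),
      P (s (t, i) ⁻¹' {x}) = ENNReal.ofReal (ℓ i x θ))
    (μ : ℕ → Fin n → Ω → Θ → ℝ)
    (h0 : ∀ i ω θh, μ 0 i ω θh =
      ν θh * ℓ i (s (0, i) ω) θh / ∑ θt, ν θt * ℓ i (s (0, i) ω) θt)
    (hstep : ∀ t i ω θh, μ (t + 1) i ω θh =
      μ t (i - 1) ω θh * ℓ i (s (t + 1, i) ω) θh /
        ∑ θt, μ t (i - 1) ω θt * ℓ i (s (t + 1, i) ω) θt)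
    (hglobal : ∀ θc : Θ, θc ≠ θ →
      0 < ∑ j, ∑ x, ℓ j x θ * Real.log (ℓ j x θ / ℓ j x θc)) :
    ∀ i : Fin n,
      ∀ᵐ ω ∂P, Tendsto (fun t => μ t i ω θ) atTop (nhds 1) :=
  directed_cycle_learning_general S θ ℓ hℓ ν hν P s hmeas hindep hlaw μ h0 hstep hglobal
end

section
/- Let Θ and all S_i be finite, priors ν_i full support, likelihoods strictly positive. The time-one Bayesian belief of agent i given her own signal s_{i,0} and her neighbors' time-zero Bayesian beliefs μ_{j,0}(·) (each formed via Bayes rule from ν_j and signal s_{j,0}) satisfies: μ_{i,1}(θ̂) = ν_i(θ̂)ℓ_i(s_{i,0}|θ̂)·∏_{j∈N(i)} (μ_{j,0}(θ̂)/ν_j(θ̂)) / ∑_{θ̃∈Θ} ν_i(θ̃)ℓ_i(s_{i,0}|θ̃)·∏_{j∈N(i)} (μ_{j,0}(θ̃)/ν_j(θ̃)), provided the signals s_{j,0}, j ∈ N(i), and s_{i,0} are mutually independent conditional on each θ̃ and the map from signals to time-zero beliefs is measurable with the observed beliefs revealing exactly the event {s_{j,0} ∈ I_j(μ_{j,0})},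 where I_j(π) is the set of signals producing posterior π. -/
open Finset

/-!
Every signal `s` that would have produced neighbor `j`'s observed posterior `μ` satisfies
`ℓ(s|θ) = μ(θ)/ν(θ) · Z(s)`, where the marginal probability `Z(s)` does not depend on `θ`.
Summing over the consistency set `I_j` and multiplying over the neighbors, the likelihood
of the observed beliefs is `∏ⱼ μ_j(θ)/ν_j(θ)` times a positive constant, which cancels on
normalization.
-/

theorem sum_likelihood_eq_posterior_div_prior_mul {Θ σ K : Type*} [Fintype Θ] [Field K]
    (T : Finset σ) (ν μ : Θ → K) (ℓ : σ → Θ → K) {θ : Θ} (hν : ν θ ≠ 0)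
    (hZ : ∀ s ∈ T, ∑ θ', ν θ' * ℓ s θ' ≠ 0)
    (hμ : ∀ s ∈ T, μ θ = ν θ * ℓ s θ / ∑ θ', ν θ' * ℓ s θ') :
    ∑ s ∈ T, ℓ s θ = μ θ / ν θ * ∑ s ∈ T, ∑ θ', ν θ' * ℓ s θ' := by
  rw [mul_sum]
  refine sum_congr rfl fun s hs => ?_
  rw [hμ s hs]
  field_simp [hZ s hs]

theorem div_sum_mul_const {ι K : Type*} [Field K] (s : Finset ι) (f : ι → K) {c : K}
    (hc : c ≠ 0) (i : ι) :
    f i * c / ∑ j ∈ s, f j * c = f i / ∑ j ∈ s, f j := by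
  rw [← sum_mul, mul_div_mul_right _ _ hc]

theorem time_one_bayesian_beliefs_general
    {Θ : Type*} [Fintype Θ]
    {n : ℕ} (N : Finset (Fin n))
    (S : Fin n → Type*) [∀ j, Fintype (S j)]
    (Si : Type*)
    (ℓ : ∀ j, S j → Θ → ℝ) (hℓ : ∀ j s θh, 0 < ℓ j s θh)
    (ℓi : Si → Θ → ℝ)
    (ν : Fin n → Θ → ℝ) (hν : ∀ j θh, 0 < ν j θh)
    (νi : Θ → ℝ)
    (sig : ∀ j, S j) (si : Si)
    -- the neighbors' time-zero Bayesian posteriors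
    (μ0 : Fin n → Θ → ℝ)
    (hμ0 : ∀ j θh, μ0 j θh =
      ν j θh * ℓ j (sig j) θh / ∑ θt, ν j θt * ℓ j (sig j) θt)
    -- the sets of signals consistent with the observed posteriors
    (I : ∀ j, Finset (S j))
    (hI : ∀ j, I j = Finset.univ.filter (fun s =>
      ∀ θh, μ0 j θh = ν j θh * ℓ j s θh / ∑ θt, ν j θt * ℓ j s θt)) :
    ∀ θh : Θ,
      (νi θh * ℓi si θh * ∏ j ∈ N, ∑ s ∈ I j, ℓ j s θh) /
          (∑ θt, νi θt * ℓi si θt * ∏ j ∈ N, ∑ s ∈ I j, ℓ j s θt)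
        =
      (νi θh * ℓi si θh * ∏ j ∈ N, (μ0 j θh / ν j θh)) /
          (∑ θt, νi θt * ℓi si θt * ∏ j ∈ N, (μ0 j θt / ν j θt)) := by
  intro θh
  have hZ : ∀ j s, 0 < ∑ θt, ν j θt * ℓ j s θt := fun j s =>
    sum_pos (fun θ _ => mul_pos (hν j θ) (hℓ j s θ)) ⟨θh, mem_univ θh⟩
  have hI_mem : ∀ j, ∀ s ∈ I j, ∀ θ,
      μ0 j θ = ν j θ * ℓ j s θ / ∑ θt, ν j θt * ℓ j s θt :=
    fun j s hs => by simpa [hI j] using hs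
  have hsig : ∀ j, sig j ∈ I j := fun j => by simpa [hI j] using hμ0 j
  set c : Fin n → ℝ := fun j => ∑ s ∈ I j, ∑ θt, ν j θt * ℓ j s θt
  have hc : 0 < ∏ j ∈ N, c j := prod_pos fun j _ =>
    sum_pos' (fun s _ => (hZ j s).le) ⟨sig j, hsig j, hZ j (sig j)⟩
  have hsum : ∀ θ,
      ∏ j ∈ N, ∑ s ∈ I j, ℓ j s θ = (∏ j ∈ N, μ0 j θ / ν j θ) * ∏ j ∈ N, c j :=
    fun θ => by
      rw [← prod_mul_distrib]
      exact prod_congr rfl fun j _ => sum_likelihood_eq_posterior_div_prior_mul _ _ _ _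
        (hν j θ).ne' (fun s _ => (hZ j s).ne') (fun s hs => hI_mem j s hs θ)
  simp only [hsum, ← mul_assoc]
  exact div_sum_mul_const univ (fun θ => νi θ * ℓi si θ * ∏ j ∈ N, μ0 j θ / ν j θ)
    hc.ne' θh

/-- Lemma 2 (time-one Bayesian beliefs): the Bayesian posterior of agent `i`
who observes her own private signal and her neighbors' time-zero Bayes
posteriors (each formed from the neighbor's prior and conditionally
independent private signal, the observed posterior revealing exactly the set
`I_j` of signals producing it) is the log-linear combination in which each
neighbor's posterior is divided by that neighbor's prior.  The left-hand side
is the exact Bayesian conditional probability, computed by summing the joint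
likelihood over all signal profiles consistent with the observed beliefs. -/
theorem time_one_bayesian_beliefs
    {Θ : Type*} [Fintype Θ] [DecidableEq Θ]
    {n : ℕ} (N : Finset (Fin n))
    (S : Fin n → Type*) [∀ j, Fintype (S j)] [∀ j, DecidableEq (S j)]
    (Si : Type*) [Fintype Si]
    (ℓ : ∀ j, S j → Θ → ℝ) (hℓ : ∀ j s θh, 0 < ℓ j s θh)
    (ℓi : Si → Θ → ℝ) (hℓi : ∀ s θh, 0 < ℓi s θh)
    (ν : Fin n → Θ → ℝ) (hν : ∀ j θh, 0 < ν j θh)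
    (νi : Θ → ℝ) (hνi : ∀ θh, 0 < νi θh)
    (sig : ∀ j, S j) (si : Si)
    -- the neighbors' time-zero Bayesian posteriors
    (μ0 : Fin n → Θ → ℝ)
    (hμ0 : ∀ j θh, μ0 j θh =
      ν j θh * ℓ j (sig j) θh / ∑ θt, ν j θt * ℓ j (sig j) θt)
    -- the sets of signals consistent with the observed posteriors
    (I : ∀ j, Finset (S j))
    (hI : ∀ j, I j = Finset.univ.filter (fun s =>
      ∀ θh, μ0 j θh = ν j θh * ℓ j s θh / ∑ θt, ν j θt * ℓ j s θt)) :
    ∀ θh : Θ,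
      (νi θh * ℓi si θh * ∏ j ∈ N, ∑ s ∈ I j, ℓ j s θh) /
          (∑ θt, νi θt * ℓi si θt * ∏ j ∈ N, ∑ s ∈ I j, ℓ j s θt)
        =
      (νi θh * ℓi si θh * ∏ j ∈ N, (μ0 j θh / ν j θh)) /
          (∑ θt, νi θt * ℓi si θt * ∏ j ∈ N, (μ0 j θt / ν j θt)) :=
  time_one_bayesian_beliefs_general N S Si ℓ hℓ ℓi ν hν νi sig si μ0 hμ0 I hI
end
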